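/- arXiv:2112.14424 — 2 statements merged into one kernel-verified Lean document; each statement's English description precedes it below -/
import Mathlib

section
/- If a POVM {M_i}_{i=1}^n achieves q_G(E) = max over POVMs of ∑_i η_i Tr(ρ_i^PT M_i) for a bipartite ensemble E = {(η_i, ρ_i)}, then M_i (η_i ρ_i^PT − η_j ρ_j^PT) M_j = 0 for all i, j. -/
open Matrix ComplexOrder

noncomputable section

abbrev Op (d₁ d₂ : ℕ) := Matrix (Fin d₁ × Fin d₂) (Fin d₁ × Fin d₂) ℂ

/-- Partial transpose with respect to the second tensor factor. -/
def PT {d₁ d₂ : ℕ} (M : Op d₁ d₂) : Op d₁ d₂ :=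
  Matrix.of fun p q => M (p.1, q.2) (q.1, p.2)

/-- A POVM: positive semidefinite operators summing to the identity. -/
def IsPOVM {n d₁ d₂ : ℕ} (M : Fin n → Op d₁ d₂) : Prop :=
  (∀ i, (M i).PosSemidef) ∧ ∑ i, M i = 1

/-- A PPT POVM: a POVM whose elements all have positive semidefinite
partial transpose. -/
def IsPPTPOVM {n d₁ d₂ : ℕ} (M : Fin n → Op d₁ d₂) : Prop :=
  IsPOVM M ∧ ∀ i, (PT (M i)).PosSemidef

/-- Success probability ∑ i, η i Tr(ρ i M i) of discriminating the ensemble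
{(η i, ρ i)} with the measurement {M i}. -/
def ensVal {n d₁ d₂ : ℕ} (η : Fin n → ℝ) (ρ M : Fin n → Op d₁ d₂) : ℝ :=
  ∑ i, η i * ((ρ i * M i).trace).re

/-- The ensemble conditions: probabilities η and density operators ρ. -/
def IsEnsemble {n d₁ d₂ : ℕ} (η : Fin n → ℝ) (ρ : Fin n → Op d₁ d₂) : Prop :=
  (∀ i, 0 ≤ η i) ∧ ∑ i, η i = 1 ∧ ∀ i, (ρ i).PosSemidef ∧ (ρ i).trace = 1


/-!
Write `M i = R * R` and `M j = T * T` with `R`, `T` Hermitian, and let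
`Δ = η i • PT (ρ i) - η j • PT (ρ j)`. For a contraction `X` and an angle `t`, with `c = cos t`,
`s = sin t`, the Gram matrices of `c R + s X T` and `c T - s Xᴴ R`, padded by the positive defects
`s² T (1 - Xᴴ X) T` and `s² R (1 - X Xᴴ) R`, replace `M i` and `M j` by `M i + D` and `M j - D`
with `D = s² (M j - M i) + c s (R X T + T Xᴴ R)`, and the result is again a POVM. Its value
exceeds that of `M` by `s² a + 2 s c Re Tr(T Δ R X)` for a constant `a`, so optimality for all
`t` forces `Re Tr(T Δ R X) = 0`. Taking for `X` the rank-one partial isometries `z E_pq` with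
`z = 1, i` shows `T Δ R = 0`; hence `M j Δ M i = 0`, and its adjoint is `M i Δ M j`.
-/

open Real Filter Topology

lemma PT_isHermitian {d₁ d₂ : ℕ} {A : Op d₁ d₂} (hA : A.IsHermitian) : (PT A).IsHermitian := by
  ext p q
  simpa [PT] using congrFun (congrFun hA (p.1, q.2)) (q.1, p.2)

lemma eq_zero_of_forall_sin_sq_mul_add_sin_mul_cos_mul_nonpos {a b : ℝ}
    (h : ∀ t, sin t ^ 2 * a + sin t * cos t * b ≤ 0) : b = 0 := by
  have hg : Tendsto (fun t => a * sin t + b * cos t) (𝓝 0) (𝓝 b) :=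
    (by fun_prop : Continuous fun t => a * sin t + b * cos t).tendsto' 0 b (by simp)
  apply le_antisymm
  · refine le_of_tendsto (hg.mono_left (nhdsWithin_le_nhds (s := Set.Ioi 0))) ?_
    filter_upwards [Ioo_mem_nhdsGT pi_pos] with t ht
    nlinarith [h t, sin_pos_of_pos_of_lt_pi ht.1 ht.2]
  · refine ge_of_tendsto (hg.mono_left (nhdsWithin_le_nhds (s := Set.Iio 0))) ?_
    filter_upwards [Ioo_mem_nhdsLT (neg_lt_zero.2 pi_pos)] with t ht
    nlinarith [h t, sin_neg_of_neg_of_neg_pi_lt ht.2 ht.1]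

lemma isHermitian_ofReal_smul_sub_ofReal_smul {m : Type*} {A B : Matrix m m ℂ}
    (hA : A.IsHermitian) (hB : B.IsHermitian) (a b : ℝ) :
    ((a : ℂ) • A - (b : ℂ) • B).IsHermitian := by
  simp only [IsHermitian, conjTranspose_sub, conjTranspose_smul, hA.eq, hB.eq, Complex.star_def,
    Complex.conj_ofReal]

section Matrix

variable {m : Type*} [Fintype m]

lemma re_trace_mul_add_conjTranspose {Δ R T X : Matrix m m ℂ} (hΔ : Δ.IsHermitian)
    (hR : R.IsHermitian) (hT : T.IsHermitian) :
    (Δ * (R * X * T + T * Xᴴ * R)).trace.re = 2 * (T * Δ * R * X).trace.re := by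
  have h₁ : (Δ * (R * X * T)).trace = (T * Δ * R * X).trace := by
    rw [← Matrix.mul_assoc, ← Matrix.mul_assoc, trace_mul_comm]
    simp only [Matrix.mul_assoc]
  have h₂ : (Δ * (T * Xᴴ * R)).trace = star (T * Δ * R * X).trace := by
    rw [← trace_conjTranspose, show Δ * (T * Xᴴ * R) = Δ * T * Xᴴ * R by
      simp only [Matrix.mul_assoc], trace_mul_comm]
    simp only [conjTranspose_mul, hΔ.eq, hR.eq, hT.eq]
    rw [trace_mul_comm Xᴴ]
    simp only [Matrix.mul_assoc]
  rw [Matrix.mul_add, trace_add, h₁, h₂, Complex.add_re, Complex.star_def, Complex.conj_re]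
  ring

variable [DecidableEq m]

open scoped MatrixOrder in
lemma Matrix.PosSemidef.exists_isHermitian_mul_self_eq {A : Matrix m m ℂ} (hA : A.PosSemidef) :
    ∃ R : Matrix m m ℂ, R.IsHermitian ∧ R * R = A :=
  ⟨CFC.sqrt A, (CFC.sqrt_nonneg A).posSemidef.1, CFC.sqrt_mul_sqrt_self A hA.nonneg⟩

lemma posSemidef_one_sub_single (q : m) : (1 - single q q (1 : ℂ)).PosSemidef := by
  have hP : (1 - single q q (1 : ℂ))ᴴ * (1 - single q q 1) = 1 - single q q 1 := by
    simp [sub_mul, mul_sub, single_mul_single_same]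
  exact hP ▸ posSemidef_conjTranspose_mul_self _

lemma posSemidef_mul_self_add_rotation {R T X : Matrix m m ℂ} (hR : R.IsHermitian)
    (hT : T.IsHermitian) (hX : (1 - Xᴴ * X).PosSemidef) {c s : ℝ} (hcs : c ^ 2 + s ^ 2 = 1) :
    (R * R + (s ^ 2 • (T * T - R * R) + (c * s) • (R * X * T + T * Xᴴ * R))).PosSemidef := by
  have hgram : R * R + (s ^ 2 • (T * T - R * R) + (c * s) • (R * X * T + T * Xᴴ * R)) =
      (c • R + s • (X * T))ᴴ * (c • R + s • (X * T)) +
        s ^ 2 • (Tᴴ * (1 - Xᴴ * X) * T) := by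
    simp only [conjTranspose_add, conjTranspose_smul, conjTranspose_mul, hR.eq, hT.eq,
      star_trivial, add_mul, mul_add, sub_mul, mul_sub, smul_mul_assoc, mul_smul_comm,
      Matrix.mul_assoc, Matrix.mul_one]
    linear_combination (norm := module) -hcs • (R * R)
  rw [hgram]
  exact (posSemidef_conjTranspose_mul_self _).add
    ((hX.conjTranspose_mul_mul_same T).smul (sq_nonneg s))

lemma eq_zero_of_forall_re_trace_mul_eq_zero {Y : Matrix m m ℂ}
    (h : ∀ X, (1 - Xᴴ * X).PosSemidef → (1 - X * Xᴴ).PosSemidef → (Y * X).trace.re = 0) :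
    Y = 0 := by
  have hentry : ∀ p q (z : ℂ), star z * z = 1 → (Y q p * z).re = 0 := fun p q z hz => by
    have hz' : z * star z = 1 := by rw [mul_comm, hz]
    have hX : (1 - (single p q z)ᴴ * single p q z).PosSemidef := by
      rw [conjTranspose_single, single_mul_single_same, hz]
      exact posSemidef_one_sub_single q
    have hX' : (1 - single p q z * (single p q z)ᴴ).PosSemidef := by
      rw [conjTranspose_single, single_mul_single_same, hz']
      exact posSemidef_one_sub_single p
    simpa [trace_mul_single] using h (single p q z) hX hX'
  ext q p
  apply Complex.ext
  · simpa using hentry p q 1 (by simp)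
  · simpa using hentry p q Complex.I (by simp)

end Matrix

section POVM

variable {n d₁ d₂ : ℕ} {η : Fin n → ℝ} {σ M : Fin n → Op d₁ d₂}

lemma ensVal_add (N N' : Fin n → Op d₁ d₂) :
    ensVal η σ (N + N') = ensVal η σ N + ensVal η σ N' := by
  simp only [ensVal, Pi.add_apply, mul_add, trace_add, Complex.add_re, Finset.sum_add_distrib]

lemma ensVal_single (i : Fin n) (D : Op d₁ d₂) :
    ensVal η σ (Pi.single i D) = η i * (σ i * D).trace.re := by
  rw [ensVal, Finset.sum_eq_single i] <;> simp +contextual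

lemma IsPOVM.add_single_add_single_neg (hM : IsPOVM M) {i j : Fin n} (hij : i ≠ j)
    {D : Op d₁ d₂} (hi : (M i + D).PosSemidef) (hj : (M j - D).PosSemidef) :
    IsPOVM (M + Pi.single i D + Pi.single j (-D)) := by
  refine ⟨fun k => ?_, ?_⟩
  · rcases eq_or_ne k i with rfl | hki
    · simpa [hij] using hi
    rcases eq_or_ne k j with rfl | hkj
    · simpa [hki, sub_eq_add_neg] using hj
    · simpa [hki, hkj] using hM.1 k
  · simp [Finset.sum_add_distrib, hM.2]

lemma IsPOVM.re_trace_mul_nonpos_of_optimal (hM : IsPOVM M)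
    (hopt : ∀ N, IsPOVM N → ensVal η σ N ≤ ensVal η σ M) {i j : Fin n} (hij : i ≠ j)
    {D : Op d₁ d₂} (hi : (M i + D).PosSemidef) (hj : (M j - D).PosSemidef) :
    (((η i : ℂ) • σ i - (η j : ℂ) • σ j) * D).trace.re ≤ 0 := by
  have h := hopt _ (hM.add_single_add_single_neg hij hi hj)
  rw [ensVal_add, ensVal_add, ensVal_single, ensVal_single] at h
  simp only [sub_mul, smul_mul_assoc, trace_sub, trace_smul, Matrix.mul_neg, trace_neg,
    Complex.sub_re, Complex.neg_re, smul_eq_mul, Complex.re_ofReal_mul] at h ⊢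
  linarith

lemma IsPOVM.re_trace_mul_eq_zero_of_optimal (hσ : ∀ k, (σ k).IsHermitian) (hM : IsPOVM M)
    (hopt : ∀ N, IsPOVM N → ensVal η σ N ≤ ensVal η σ M) {i j : Fin n} (hij : i ≠ j)
    {R T X : Op d₁ d₂} (hR : R.IsHermitian) (hT : T.IsHermitian) (hRR : R * R = M i)
    (hTT : T * T = M j) (hX : (1 - Xᴴ * X).PosSemidef) (hX' : (1 - X * Xᴴ).PosSemidef) :
    (T * ((η i : ℂ) • σ i - (η j : ℂ) • σ j) * R * X).trace.re = 0 := by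
  set Δ := (η i : ℂ) • σ i - (η j : ℂ) • σ j
  have hΔ : Δ.IsHermitian := isHermitian_ofReal_smul_sub_ofReal_smul (hσ i) (hσ j) _ _
  suffices ∀ t, sin t ^ 2 * (Δ * (T * T - R * R)).trace.re
      + sin t * cos t * (2 * (T * Δ * R * X).trace.re) ≤ 0 by
    linarith [eq_zero_of_forall_sin_sq_mul_add_sin_mul_cos_mul_nonpos this]
  intro t
  have hcs : cos t ^ 2 + sin t ^ 2 = 1 := cos_sq_add_sin_sq t
  set D : Op d₁ d₂ :=
    sin t ^ 2 • (T * T - R * R) + (cos t * sin t) • (R * X * T + T * Xᴴ * R)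
  have hi : (M i + D).PosSemidef := hRR ▸ posSemidef_mul_self_add_rotation hR hT hX hcs
  have hj : (M j - D).PosSemidef := by
    have := posSemidef_mul_self_add_rotation hT hR (X := Xᴴ)
      (by rwa [conjTranspose_conjTranspose]) (c := cos t) (s := -sin t) (by rwa [neg_sq])
    convert this using 1
    rw [← hTT, conjTranspose_conjTranspose, neg_sq]
    module
  have h := hM.re_trace_mul_nonpos_of_optimal hopt hij hi hj
  rw [Matrix.mul_add, trace_add, mul_smul_comm, mul_smul_comm, trace_smul, trace_smul,
    Complex.add_re, Complex.smul_re, Complex.smul_re, smul_eq_mul, smul_eq_mul,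
    re_trace_mul_add_conjTranspose hΔ hR hT] at h
  linear_combination h

theorem IsPOVM.mul_smul_sub_smul_mul_eq_zero_of_optimal (hσ : ∀ k, (σ k).IsHermitian)
    (hM : IsPOVM M) (hopt : ∀ N, IsPOVM N → ensVal η σ N ≤ ensVal η σ M) (i j : Fin n) :
    M i * ((η i : ℂ) • σ i - (η j : ℂ) • σ j) * M j = 0 := by
  rcases eq_or_ne i j with rfl | hij
  · simp
  set Δ := (η i : ℂ) • σ i - (η j : ℂ) • σ j
  have hΔ : Δ.IsHermitian := isHermitian_ofReal_smul_sub_ofReal_smul (hσ i) (hσ j) _ _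
  obtain ⟨R, hR, hRR⟩ := (hM.1 i).exists_isHermitian_mul_self_eq
  obtain ⟨T, hT, hTT⟩ := (hM.1 j).exists_isHermitian_mul_self_eq
  have hTΔR : T * Δ * R = 0 := eq_zero_of_forall_re_trace_mul_eq_zero fun X hX hX' =>
    hM.re_trace_mul_eq_zero_of_optimal hσ hopt hij hR hT hRR hTT hX hX'
  calc M i * Δ * M j = (M j * Δ * M i)ᴴ := by
        rw [conjTranspose_mul, conjTranspose_mul, hΔ.eq, (hM.1 i).1.eq, (hM.1 j).1.eq,
          Matrix.mul_assoc]
    _ = (T * (T * Δ * R) * R)ᴴ := by simp only [← hRR, ← hTT, Matrix.mul_assoc]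
    _ = 0 := by rw [hTΔR, Matrix.mul_zero, Matrix.zero_mul, conjTranspose_zero]

end POVM

theorem offdiag_cond_of_qG_optimal {n d₁ d₂ : ℕ} (η : Fin n → ℝ) (ρ : Fin n → Op d₁ d₂)
    (hE : IsEnsemble η ρ) (M : Fin n → Op d₁ d₂) (hM : IsPOVM M)
    (hopt : ∀ N, IsPOVM N →
      ensVal η (fun i => PT (ρ i)) N ≤ ensVal η (fun i => PT (ρ i)) M) :
    ∀ i j, M i * ((η i : ℂ) • PT (ρ i) - (η j : ℂ) • PT (ρ j)) * M j = 0 :=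
  hM.mul_smul_sub_smul_mul_eq_zero_of_optimal (fun k => PT_isHermitian (hE.2.2 k).1.1) hopt
end
end

section
/- If a POVM {M_i}_{i=1}^n satisfies ∑_j η_j ρ_j M_j − η_i ρ_i ⪰ 0 for all i (for an ensemble {(η_i, ρ_i)}), then {M_i} achieves the guessing probability p_G(E) = max over POVMs of ∑_i η_i Tr(ρ_i M_i). -/
/-!
With `Y = ∑ⱼ ηⱼ ρⱼ Mⱼ`, positivity of `Y - ηᵢ ρᵢ` against any POVM element `Nᵢ` gives
`ηᵢ Tr(ρᵢ Nᵢ) ≤ Tr(Y Nᵢ)`; summing over `i` and using `∑ᵢ Nᵢ = 1` bounds the success probability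
of `N` by `Tr Y`, which is the success probability of `M`.
-/

open Matrix ComplexOrder

noncomputable section

namespace Matrix

variable {n 𝕜 : Type*} [Fintype n] [DecidableEq n] [RCLike 𝕜]

open scoped MatrixOrder in
/-- Writing `A = Sᴴ * S`, the trace of `A * B` is the trace of the positive matrix `S * B * Sᴴ`. -/
theorem PosSemidef.trace_mul_nonneg {A B : Matrix n n 𝕜} (hA : A.PosSemidef) (hB : B.PosSemidef) :
    0 ≤ (A * B).trace := by
  obtain ⟨S, rfl⟩ := CStarAlgebra.nonneg_iff_eq_star_mul_self.mp hA.nonneg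
  rw [star_eq_conjTranspose, ← trace_mul_cycle]
  exact (hB.mul_mul_conjTranspose_same S).trace_nonneg

theorem sum_trace_mul_le_trace_of_posSemidef_sub {ι : Type*} [Fintype ι] {Y : Matrix n n 𝕜}
    {A N : ι → Matrix n n 𝕜} (hA : ∀ i, (Y - A i).PosSemidef) (hN : ∀ i, (N i).PosSemidef)
    (hNsum : ∑ i, N i = 1) :
    ∑ i, (A i * N i).trace ≤ Y.trace :=
  calc ∑ i, (A i * N i).trace
      ≤ ∑ i, (Y * N i).trace := Finset.sum_le_sum fun i _ => sub_nonneg.mp <| by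
        simpa only [sub_mul, trace_sub] using (hA i).trace_mul_nonneg (hN i)
    _ = Y.trace := by rw [← trace_sum, ← Finset.mul_sum, hNsum, mul_one]

end Matrix

theorem guessing_optimal_of_cond_general {n : ℕ} {ι : Type*} [Fintype ι] [DecidableEq ι]
    (η : Fin n → ℝ) (ρ : Fin n → Matrix ι ι ℂ)
    (M : Fin n → Matrix ι ι ℂ)
    (hcond : ∀ i, (∑ j, (η j : ℂ) • (ρ j * M j) - (η i : ℂ) • ρ i).PosSemidef) :
    ∀ N : Fin n → Matrix ι ι ℂ, (∀ i, (N i).PosSemidef) → ∑ i, N i = 1 →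
      ∑ i, η i * ((ρ i * N i).trace).re ≤ ∑ i, η i * ((ρ i * M i).trace).re := by
  intro N hN hNsum
  have h := (Complex.le_def.mp (sum_trace_mul_le_trace_of_posSemidef_sub hcond hN hNsum)).1
  simpa [Complex.re_sum, trace_sum, smul_mul, trace_smul] using h

theorem guessing_optimal_of_cond {n : ℕ} {ι : Type*} [Fintype ι] [DecidableEq ι]
    (η : Fin n → ℝ) (ρ : Fin n → Matrix ι ι ℂ)
    (hη : ∀ i, 0 ≤ η i) (hηsum : ∑ i, η i = 1)
    (hρ : ∀ i, (ρ i).PosSemidef ∧ (ρ i).trace = 1)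
    (M : Fin n → Matrix ι ι ℂ)
    (hMpsd : ∀ i, (M i).PosSemidef) (hMsum : ∑ i, M i = 1)
    (hcond : ∀ i, (∑ j, (η j : ℂ) • (ρ j * M j) - (η i : ℂ) • ρ i).PosSemidef) :
    ∀ N : Fin n → Matrix ι ι ℂ, (∀ i, (N i).PosSemidef) → ∑ i, N i = 1 →
      ∑ i, η i * ((ρ i * N i).trace).re ≤ ∑ i, η i * ((ρ i * M i).trace).re :=
  guessing_optimal_of_cond_general η ρ M hcond
end
end
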